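/- arXiv:2004.12667 — 7 statements merged into one kernel-verified Lean document; each statement's English description precedes it below -/
import Mathlib

section
/- Let f : 2^E → ℝ be a monotone submodular function with f(∅) = 0 on a finite ground set E. Let O = {o₁,…,o_k} ⊆ E and R = {r₁,…,r_k} ⊆ E be sequences with prefix sets R_i = {r₁,…,r_i} (R₀ = ∅), and suppose f(R_i) − f(R_{i−1}) ≥ f(R_{i−1} ∪ {o_i}) − f(R_{i−1}) for all 1 ≤ i ≤ k. Then 2·f(R_k) ≥ f(O) + Σ_{i : r_i = o_i} (f(R_{i−1} ∪ {o_i}) − f(R_{i−1})). In particular f(R_k) ≥ f(O)/2. -/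
/-!
Telescoping the greedy increments shows that `f (R k)` dominates the sum of the marginal gains
`f (R i ∪ {o i}) - f (R i)`. On the other side, by monotonicity and submodularity
`f O ≤ f (R k ∪ O)` is at most `f (R k)` plus the gains of the `o i` over `R k`; those with
`r i = o i` already lie in `R k` and contribute nothing, and by diminishing returns every other
gain over `R k` is at most the gain over the prefix `R i`. Adding the two bounds, the gains with
`r i = o i` are counted once, as the bonus.
-/

open Finset

section Submodular

variable {E : Type*} [DecidableEq E]

def IsSubmodular (f : Finset E → ℝ) : Prop :=
  ∀ S T : Finset E, f (S ∪ T) + f (S ∩ T) ≤ f S + f T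

def marginalGain (f : Finset E → ℝ) (S : Finset E) (x : E) : ℝ :=
  f (insert x S) - f S

section marginalGain

variable {f : Finset E → ℝ} {S T : Finset E} {x : E}

theorem marginalGain_nonneg (hmono : Monotone f) : 0 ≤ marginalGain f S x :=
  sub_nonneg.2 (hmono (subset_insert x S))

theorem marginalGain_eq_zero_of_mem (hx : x ∈ S) : marginalGain f S x = 0 := by
  rw [marginalGain, insert_eq_of_mem hx, sub_self]

theorem IsSubmodular.marginalGain_le_of_subset (hf : IsSubmodular f) (hmono : Monotone f)
    (hST : S ⊆ T) : marginalGain f T x ≤ marginalGain f S x := by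
  have hunion : insert x S ∪ T = insert x T := by rw [insert_union, union_eq_right.2 hST]
  have hinter : f S ≤ f (insert x S ∩ T) := hmono (subset_inter (subset_insert x S) hST)
  have := hf (insert x S) T
  rw [hunion] at this
  unfold marginalGain
  linarith

theorem IsSubmodular.le_add_sum_marginalGain {ι : Type*} (hf : IsSubmodular f)
    (hmono : Monotone f) (B : Finset E) (g : ι → E) (s : Finset ι) :
    f (B ∪ s.image g) ≤ f B + ∑ i ∈ s, marginalGain f B (g i) := by
  classical
  induction s using Finset.induction_on with
  | empty => simp
  | insert a s ha ih =>
    have hstep : marginalGain f (B ∪ s.image g) (g a) ≤ marginalGain f B (g a) :=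
      hf.marginalGain_le_of_subset hmono subset_union_left
    rw [image_insert, union_insert, sum_insert ha]
    unfold marginalGain at ih hstep ⊢
    linarith

end marginalGain

theorem sum_marginalGain_le_sub_of_gain_le {f : Finset E → ℝ} {R : ℕ → Finset E} {o : ℕ → E}
    {k : ℕ} (hgain : ∀ i < k, marginalGain f (R i) (o i) ≤ f (R (i + 1)) - f (R i)) :
    ∑ i ∈ range k, marginalGain f (R i) (o i) ≤ f (R k) - f (R 0) := by
  rw [← sum_range_sub (fun i => f (R i))]
  exact sum_le_sum fun i hi => hgain i (mem_range.1 hi)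

theorem IsSubmodular.le_add_sum_marginalGain_prefix {f : Finset E → ℝ} (hf : IsSubmodular f)
    (hmono : Monotone f) {R : ℕ → Finset E} {o r : ℕ → E}
    (hR : ∀ i, R i = (range i).image r) (k : ℕ) :
    f ((range k).image o) ≤
      f (R k) + ∑ i ∈ (range k).filter (fun i => r i ≠ o i), marginalGain f (R i) (o i) := by
  have htaken : ∀ i ∈ range k, marginalGain f (R k) (o i) ≠ 0 → r i ≠ o i := by
    intro i hi hne htaken
    rw [← htaken] at hne
    exact hne (marginalGain_eq_zero_of_mem (hR k ▸ mem_image_of_mem r hi))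
  have hprefix : ∀ i ∈ range k, R i ⊆ R k := fun i hi => by
    rw [hR, hR]
    exact image_subset_image (range_subset_range.2 (mem_range.1 hi).le)
  calc f ((range k).image o)
      ≤ f (R k ∪ (range k).image o) := hmono subset_union_right
    _ ≤ f (R k) + ∑ i ∈ range k, marginalGain f (R k) (o i) :=
        hf.le_add_sum_marginalGain hmono _ _ _
    _ = f (R k) + ∑ i ∈ (range k).filter (fun i => r i ≠ o i), marginalGain f (R k) (o i) := by
        rw [sum_filter_of_ne htaken]
    _ ≤ f (R k) + ∑ i ∈ (range k).filter (fun i => r i ≠ o i), marginalGain f (R i) (o i) := by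
        gcongr with i hi
        exact hf.marginalGain_le_of_subset hmono (hprefix i (mem_filter.1 hi).1)

end Submodular

theorem greedy_half_approx_with_bonus_general {E : Type*} [DecidableEq E] (f : Finset E → ℝ)
    (hsub : ∀ S T : Finset E, f S + f T ≥ f (S ∪ T) + f (S ∩ T))
    (hmono : ∀ S T : Finset E, S ⊆ T → f S ≤ f T)
    (hnorm : f ∅ = 0)
    (k : ℕ) (o r : ℕ → E)
    (O : Finset E) (hO : O = (Finset.range k).image o)
    (R : ℕ → Finset E) (hR : ∀ i, R i = (Finset.range i).image r)
    (hgain : ∀ i < k, f (R (i + 1)) - f (R i) ≥ f (insert (o i) (R i)) - f (R i)) :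
    (2 * f (R k) ≥ f O +
      ∑ i ∈ (Finset.range k).filter (fun i => r i = o i),
        (f (insert (o i) (R i)) - f (R i))) ∧
    f (R k) ≥ f O / 2 := by
  have hf : IsSubmodular f := hsub
  have hmono : Monotone f := hmono
  have hR0 : f (R 0) = 0 := by rw [hR, range_zero, image_empty, hnorm]
  have hgreedy := sum_marginalGain_le_sub_of_gain_le hgain
  have hopt := hf.le_add_sum_marginalGain_prefix (o := o) hmono hR k
  have hsplit := sum_filter_add_sum_filter_not (range k) (fun i => r i = o i)
    (fun i => marginalGain f (R i) (o i))
  have hbonus : 0 ≤ ∑ i ∈ (range k).filter (fun i => r i = o i), marginalGain f (R i) (o i) :=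
    sum_nonneg fun _ _ => marginalGain_nonneg hmono
  subst hO
  unfold marginalGain at *
  constructor <;> linarith

/-- Greedy-type 1/2-approximation with bonus for taken optimum elements. -/
theorem greedy_half_approx_with_bonus {E : Type*} [DecidableEq E] (f : Finset E → ℝ)
    (hsub : ∀ S T : Finset E, f S + f T ≥ f (S ∪ T) + f (S ∩ T))
    (hmono : ∀ S T : Finset E, S ⊆ T → f S ≤ f T)
    (hnorm : f ∅ = 0)
    (k : ℕ) (o r : ℕ → E)
    (hoinj : Set.InjOn o (Set.Iio k))
    (O : Finset E) (hO : O = (Finset.range k).image o)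
    (R : ℕ → Finset E) (hR : ∀ i, R i = (Finset.range i).image r)
    (hgain : ∀ i < k, f (R (i + 1)) - f (R i) ≥ f (insert (o i) (R i)) - f (R i)) :
    (2 * f (R k) ≥ f O +
      ∑ i ∈ (Finset.range k).filter (fun i => r i = o i),
        (f (insert (o i) (R i)) - f (R i))) ∧
    f (R k) ≥ f O / 2 :=
  greedy_half_approx_with_bonus_general f hsub hmono hnorm k o r O hO R hR hgain
end

section
/- Let f : 2^E → ℝ be a monotone submodular function with f(∅) = 0, let O ⊆ E with |O| = k ≥ 1, and let r₁,…,r_k be a sequence with prefix sets R_i = {r₁,…,r_i}, R₀ = ∅, such that for every 1 ≤ i ≤ k, f(R_{i−1} ∪ {r_i}) − f(R_{i−1}) ≥ max_{o ∈ O} (f(R_{i−1} ∪ {o}) − f(R_{i−1})). Then f(R_k) ≥ (1 − (1 − 1/k)^k)·f(O) ≥ (1 − 1/e)·f(O). -/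
/-!
Submodularity bounds the distance `f O - f S` from any set `S` to the optimum by the sum of the
`#O` marginal gains of the elements of `O` at `S`, hence by `#O` times the greedy gain. So each
greedy step shrinks this gap by a factor `1 - 1/k`, leaving at most `(1 - 1/k)^k f O ≤ f O / e`
after `k` steps.
-/

open Finset

section Submodular

variable {E : Type*} [DecidableEq E] {f : Finset E → ℝ}

theorem insert_sub_le_insert_sub_of_subset
    (hsub : ∀ S T : Finset E, f S + f T ≥ f (S ∪ T) + f (S ∩ T))
    (hmono : ∀ S T : Finset E, S ⊆ T → f S ≤ f T)
    {S U : Finset E} (hSU : S ⊆ U) (a : E) :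
    f (insert a U) - f U ≤ f (insert a S) - f S := by
  have hunion : U ∪ insert a S = insert a U := by
    rw [union_insert, union_eq_left.mpr hSU]
  have hinter : S ⊆ U ∩ insert a S := subset_inter hSU (subset_insert a S)
  have hsubmod := hsub U (insert a S)
  rw [hunion] at hsubmod
  linarith [hmono _ _ hinter]

theorem union_sub_le_sum_insert_sub
    (hsub : ∀ S T : Finset E, f S + f T ≥ f (S ∪ T) + f (S ∩ T))
    (hmono : ∀ S T : Finset E, S ⊆ T → f S ≤ f T) (S T : Finset E) :
    f (S ∪ T) - f S ≤ ∑ o ∈ T, (f (insert o S) - f S) := by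
  induction T using Finset.induction with
  | empty => simp
  | @insert a T ha ih =>
    rw [sum_insert ha, union_insert]
    have := insert_sub_le_insert_sub_of_subset hsub hmono (subset_union_left : S ⊆ S ∪ T) a
    linarith

theorem sub_le_card_mul_insert_sub
    (hsub : ∀ S T : Finset E, f S + f T ≥ f (S ∪ T) + f (S ∩ T))
    (hmono : ∀ S T : Finset E, S ⊆ T → f S ≤ f T) {S O : Finset E} {x : E}
    (hx : ∀ o ∈ O, f (insert o S) - f S ≤ f (insert x S) - f S) :
    f O - f S ≤ #O * (f (insert x S) - f S) :=
  calc f O - f S ≤ f (S ∪ O) - f S := by linarith [hmono O (S ∪ O) subset_union_right]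
    _ ≤ ∑ o ∈ O, (f (insert o S) - f S) := union_sub_le_sum_insert_sub hsub hmono S O
    _ ≤ ∑ _o ∈ O, (f (insert x S) - f S) := sum_le_sum hx
    _ = #O * (f (insert x S) - f S) := by rw [sum_const, nsmul_eq_mul]

theorem sub_insert_le_one_sub_inv_card_mul
    (hsub : ∀ S T : Finset E, f S + f T ≥ f (S ∪ T) + f (S ∩ T))
    (hmono : ∀ S T : Finset E, S ⊆ T → f S ≤ f T) {S O : Finset E} (hO : O.Nonempty) {x : E}
    (hx : ∀ o ∈ O, f (insert o S) - f S ≤ f (insert x S) - f S) :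
    f O - f (insert x S) ≤ (1 - 1 / #O) * (f O - f S) := by
  have hcard : (0 : ℝ) < #O := by exact_mod_cast hO.card_pos
  have hgap := sub_le_card_mul_insert_sub hsub hmono hx
  have : (f O - f S) / #O ≤ f (insert x S) - f S := by
    rw [div_le_iff₀ hcard]
    linarith
  rw [sub_mul, one_mul, one_div_mul_eq_div]
  linarith

end Submodular

/-- Classical greedy guarantee: if each greedy increment dominates every
marginal gain of an element of `O`, then `f(R_k) ≥ (1-(1-1/k)^k) f(O) ≥ (1-1/e) f(O)`. -/
theorem greedy_one_minus_inv_e {E : Type*} [DecidableEq E] (f : Finset E → ℝ)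
    (hsub : ∀ S T : Finset E, f S + f T ≥ f (S ∪ T) + f (S ∩ T))
    (hmono : ∀ S T : Finset E, S ⊆ T → f S ≤ f T)
    (hnorm : f ∅ = 0)
    (k : ℕ) (hk : 1 ≤ k) (O : Finset E) (hO : O.card = k)
    (r : ℕ → E) (R : ℕ → Finset E) (hR : ∀ i, R i = (Finset.range i).image r)
    (hgain : ∀ i < k, ∀ x ∈ O,
      f (insert (r i) (R i)) - f (R i) ≥ f (insert x (R i)) - f (R i)) :
    f (R k) ≥ (1 - (1 - 1 / (k : ℝ)) ^ k) * f O ∧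
    (1 - (1 - 1 / (k : ℝ)) ^ k) * f O ≥ (1 - 1 / Real.exp 1) * f O := by
  have hk' : (1 : ℝ) ≤ k := by exact_mod_cast hk
  have hR_succ (i : ℕ) : R (i + 1) = insert (r i) (R i) := by
    rw [hR, hR, range_add_one, image_insert]
  have hO_nonempty : O.Nonempty := card_pos.mp (hO ▸ hk)
  have hgap : f O - f (R k) ≤ (1 - 1 / (k : ℝ)) ^ k * (f O - f (R 0)) :=
    le_geom (u := fun i ↦ f O - f (R i))
      (sub_nonneg.mpr (div_le_one_of_le₀ hk' (by positivity))) k fun i hi ↦ by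
        simpa only [hR_succ, hO] using
          sub_insert_le_one_sub_inv_card_mul hsub hmono hO_nonempty (hgain i hi)
  have hR_zero : f (R 0) = 0 := by rw [hR, range_zero, image_empty, hnorm]
  have hfO : 0 ≤ f O := hnorm ▸ hmono ∅ O (empty_subset O)
  have hexp : (1 - 1 / (k : ℝ)) ^ k ≤ 1 / Real.exp 1 := by
    simpa only [Real.exp_neg, one_div] using Real.one_sub_div_pow_le_exp_neg hk'
  rw [hR_zero, sub_zero] at hgap
  constructor
  · linarith
  · nlinarith
end

section
/- For all real t ∈ (0,1] and integers k ≥ 2, the function h ↦ k·(1 − t/k)^h − (k−1)·(1 − t/(k−1))^h is monotonically decreasing in the integer h ≥ 0; that is, for every h ≥ 0, k·(1 − t/k)^h − (k−1)·(1 − t/(k−1))^h ≥ k·(1 − t/k)^{h+1} − (k−1)·(1 − t/(k−1))^{h+1}. -/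
/-! Since `c (1 - t/c)^h - c (1 - t/c)^(h+1) = t (1 - t/c)^h` for every `c ≠ 0`, the decrement of
the sequence from `h` to `h + 1` is `t ((1 - t/k)^h - (1 - t/(k-1))^h)`, which is nonnegative
because `0 ≤ 1 - t/(k-1) ≤ 1 - t/k`. -/

lemma mul_one_sub_div_pow_sub_pow_succ {c : ℝ} (hc : c ≠ 0) (t : ℝ) (n : ℕ) :
    c * (1 - t / c) ^ n - c * (1 - t / c) ^ (n + 1) = t * (1 - t / c) ^ n := by
  rw [pow_succ]
  field_simp
  ring

/-- Monotone decrease in `h` of `k (1 - t/k)^h - (k-1) (1 - t/(k-1))^h`. -/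
theorem E1_decreasing (t : ℝ) (ht0 : 0 < t) (ht1 : t ≤ 1)
    (k : ℕ) (hk : 2 ≤ k) (h : ℕ) :
    (k : ℝ) * (1 - t / (k : ℝ)) ^ h - ((k : ℝ) - 1) * (1 - t / ((k : ℝ) - 1)) ^ h
      ≥ (k : ℝ) * (1 - t / (k : ℝ)) ^ (h + 1)
        - ((k : ℝ) - 1) * (1 - t / ((k : ℝ) - 1)) ^ (h + 1) := by
  have hk1 : (1 : ℝ) ≤ (k : ℝ) - 1 := by
    have : (2 : ℝ) ≤ k := by exact_mod_cast hk
    linarith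
  have hb_nonneg : 0 ≤ 1 - t / ((k : ℝ) - 1) :=
    sub_nonneg.2 ((div_le_one (by linarith)).2 (by linarith))
  have hb_le_ha : 1 - t / ((k : ℝ) - 1) ≤ 1 - t / k :=
    sub_le_sub_left (div_le_div_of_nonneg_left ht0.le (by linarith) (by linarith)) 1
  have hpow := mul_le_mul_of_nonneg_left (pow_le_pow_left₀ hb_nonneg hb_le_ha h) ht0.le
  have hdiff_a := mul_one_sub_div_pow_sub_pow_succ (c := (k : ℝ)) (by linarith) t h
  have hdiff_b := mul_one_sub_div_pow_sub_pow_succ (c := (k : ℝ) - 1) (by linarith) t h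
  linarith
end

section
/- Let G be a finite simple graph and let σ and σ' be finite sequences of edges of G such that σ' is obtained from σ by deleting a single edge. Let M and M' be the matchings computed by the greedy maximal-matching algorithm (which processes edges in order and adds an edge iff both its endpoints are currently unmatched) on σ and σ' respectively. Then | |M| − |M'| | ≤ 1. -/
/-!
Track the set of matched vertices instead of the matching itself. Every edge the greedy
algorithm accepts covers two previously unmatched vertices, so a greedy matching covers
exactly twice as many vertices as it has edges. Run the algorithm on the two streams side by side
after the common prefix: the vertex sets then differ in at most the two endpoints of the deleted
edge, and this symmetric difference never grows. When an edge is accepted by only one run, it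
has an endpoint matched in the other run but not in this one; that endpoint leaves the
symmetric difference, and at most the other endpoint enters it.
So the vertex counts differ by at most 2 and the matching sizes by at most 1.
-/

open Classical in
/-- The greedy maximal-matching algorithm: process edges in order, adding an
edge iff it is not a loop and both its endpoints are currently unmatched. -/
noncomputable def greedyMatching {V : Type*} (σ : List (Sym2 V)) : Finset (Sym2 V) :=
  σ.foldl (fun M e =>
    if ¬ e.IsDiag ∧ ∀ f ∈ M, ∀ v, v ∈ e → v ∉ f then insert e M else M) ∅

section SymmDiff

variable {α : Type*} [DecidableEq α]

open Finset
open scoped symmDiff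

lemma Finset.card_symmDiff_le_of_card_le_two {s t : Finset α} (hs : #s ≤ 2)
    (hst : (s ∩ t).Nonempty) : #(s ∆ t) ≤ #t := by
  rw [Finset.symmDiff_def, card_union_of_disjoint disjoint_sdiff_sdiff]
  have hs' := card_sdiff_add_card_inter s t
  have ht' := card_sdiff_add_card_inter t s
  rw [inter_comm] at ht'
  have := hst.card_pos
  omega

lemma Finset.abs_card_sub_card_le_card_symmDiff (s t : Finset α) :
    |(#s : ℤ) - #t| ≤ #(s ∆ t) := by
  rw [Finset.symmDiff_def, card_union_of_disjoint disjoint_sdiff_sdiff]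
  have hs := card_sdiff_add_card_inter s t
  have ht := card_sdiff_add_card_inter t s
  rw [inter_comm] at ht
  rw [abs_le]
  constructor <;> omega

end SymmDiff

namespace GreedyMatching

open Finset Classical
open scoped symmDiff

variable {V : Type*}

noncomputable def greedyStep (M : Finset (Sym2 V)) (e : Sym2 V) : Finset (Sym2 V) :=
  if ¬ e.IsDiag ∧ ∀ f ∈ M, ∀ v, v ∈ e → v ∉ f then insert e M else M

lemma greedyMatching_eq_foldl (σ : List (Sym2 V)) :
    greedyMatching σ = σ.foldl greedyStep ∅ :=
  rfl

noncomputable def matchedVerts (M : Finset (Sym2 V)) : Finset V :=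
  M.biUnion Sym2.toFinset

def CanAdd (M : Finset (Sym2 V)) (e : Sym2 V) : Prop :=
  ¬ e.IsDiag ∧ Disjoint e.toFinset (matchedVerts M)

lemma canAdd_iff {M : Finset (Sym2 V)} {e : Sym2 V} :
    CanAdd M e ↔ ¬ e.IsDiag ∧ ∀ f ∈ M, ∀ v, v ∈ e → v ∉ f := by
  simp only [CanAdd, matchedVerts, disjoint_left, Sym2.mem_toFinset, mem_biUnion, not_exists,
    not_and]
  grind

lemma greedyStep_of_canAdd {M : Finset (Sym2 V)} {e : Sym2 V} (h : CanAdd M e) :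
    greedyStep M e = insert e M :=
  if_pos (canAdd_iff.mp h)

lemma greedyStep_of_not_canAdd {M : Finset (Sym2 V)} {e : Sym2 V} (h : ¬ CanAdd M e) :
    greedyStep M e = M :=
  if_neg (mt canAdd_iff.mpr h)

lemma CanAdd.notMem {M : Finset (Sym2 V)} {e : Sym2 V} (h : CanAdd M e) : e ∉ M := fun he =>
  e.toFinset_ne_empty <| disjoint_self_iff_empty _ |>.mp <|
    h.2.mono_right (subset_biUnion_of_mem Sym2.toFinset he)

lemma matchedVerts_greedyStep_of_canAdd {M : Finset (Sym2 V)} {e : Sym2 V} (h : CanAdd M e) :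
    matchedVerts (greedyStep M e) = e.toFinset ∆ matchedVerts M := by
  rw [greedyStep_of_canAdd h, matchedVerts, biUnion_insert, symmDiff_eq_union h.2]
  rfl

lemma card_matchedVerts_greedyStep {M : Finset (Sym2 V)} (e : Sym2 V)
    (hM : #(matchedVerts M) = 2 * #M) :
    #(matchedVerts (greedyStep M e)) = 2 * #(greedyStep M e) := by
  by_cases h : CanAdd M e
  · rw [matchedVerts_greedyStep_of_canAdd h, symmDiff_eq_union h.2,
      card_union_of_disjoint h.2, Sym2.card_toFinset_of_not_isDiag e h.1,
      greedyStep_of_canAdd h, card_insert_of_notMem h.notMem]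
    omega
  · rwa [greedyStep_of_not_canAdd h]

lemma card_matchedVerts_greedyMatching (σ : List (Sym2 V)) :
    #(matchedVerts (greedyMatching σ)) = 2 * #(greedyMatching σ) := by
  rw [greedyMatching_eq_foldl]
  suffices ∀ M : Finset (Sym2 V), #(matchedVerts M) = 2 * #M →
      #(matchedVerts (σ.foldl greedyStep M)) = 2 * #(σ.foldl greedyStep M) from
    this ∅ rfl
  induction σ with
  | nil => exact fun _ hM => hM
  | cons e σ ih => exact fun M hM => ih _ (card_matchedVerts_greedyStep e hM)

lemma card_symmDiff_matchedVerts_greedyStep_le_of_canAdd_of_not_canAdd {M N : Finset (Sym2 V)}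
    {e : Sym2 V} (hM : CanAdd M e) (hN : ¬ CanAdd N e) :
    #(matchedVerts (greedyStep M e) ∆ matchedVerts N) ≤
      #(matchedVerts M ∆ matchedVerts N) := by
  rw [matchedVerts_greedyStep_of_canAdd hM, symmDiff_assoc]
  refine card_symmDiff_le_of_card_le_two (Sym2.card_toFinset_of_not_isDiag e hM.1).le ?_
  obtain ⟨v, hve, hvN⟩ := not_disjoint_iff.mp fun hdisj => hN ⟨hM.1, hdisj⟩
  have hvM : v ∉ matchedVerts M := disjoint_left.mp hM.2 hve
  exact ⟨v, mem_inter.mpr ⟨hve, mem_symmDiff.mpr (.inr ⟨hvN, hvM⟩)⟩⟩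

lemma card_symmDiff_matchedVerts_greedyStep_le (M N : Finset (Sym2 V)) (e : Sym2 V) :
    #(matchedVerts (greedyStep M e) ∆ matchedVerts (greedyStep N e)) ≤
      #(matchedVerts M ∆ matchedVerts N) := by
  by_cases hM : CanAdd M e <;> by_cases hN : CanAdd N e
  · rw [matchedVerts_greedyStep_of_canAdd hM, matchedVerts_greedyStep_of_canAdd hN,
      symmDiff_symmDiff_symmDiff_comm, symmDiff_self, bot_symmDiff]
  · rw [greedyStep_of_not_canAdd hN]
    exact card_symmDiff_matchedVerts_greedyStep_le_of_canAdd_of_not_canAdd hM hN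
  · rw [greedyStep_of_not_canAdd hM, symmDiff_comm, symmDiff_comm (matchedVerts M)]
    exact card_symmDiff_matchedVerts_greedyStep_le_of_canAdd_of_not_canAdd hN hM
  · rw [greedyStep_of_not_canAdd hM, greedyStep_of_not_canAdd hN]

lemma card_symmDiff_matchedVerts_foldl_le (σ : List (Sym2 V)) (M N : Finset (Sym2 V)) :
    #(matchedVerts (σ.foldl greedyStep M) ∆ matchedVerts (σ.foldl greedyStep N)) ≤
      #(matchedVerts M ∆ matchedVerts N) := by
  induction σ generalizing M N with
  | nil => exact le_rfl
  | cons e σ ih => exact (ih _ _).trans (card_symmDiff_matchedVerts_greedyStep_le M N e)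

lemma card_symmDiff_matchedVerts_greedyStep_self_le (M : Finset (Sym2 V)) (e : Sym2 V) :
    #(matchedVerts (greedyStep M e) ∆ matchedVerts M) ≤ 2 := by
  by_cases h : CanAdd M e
  · rw [matchedVerts_greedyStep_of_canAdd h, symmDiff_symmDiff_cancel_right,
      Sym2.card_toFinset_of_not_isDiag e h.1]
  · simp [greedyStep_of_not_canAdd h]

end GreedyMatching

open Finset GreedyMatching
open scoped symmDiff

theorem greedy_robust_general {V : Type*}
    (σ₁ σ₂ : List (Sym2 V)) (e : Sym2 V) :
    |((greedyMatching (σ₁ ++ e :: σ₂)).card : ℤ)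
      - ((greedyMatching (σ₁ ++ σ₂)).card : ℤ)| ≤ 1 := by
  classical
  have hverts : #(matchedVerts (greedyMatching (σ₁ ++ e :: σ₂)) ∆
      matchedVerts (greedyMatching (σ₁ ++ σ₂))) ≤ 2 := by
    simp only [greedyMatching_eq_foldl, List.foldl_append, List.foldl_cons]
    exact (card_symmDiff_matchedVerts_foldl_le σ₂ _ _).trans
      (card_symmDiff_matchedVerts_greedyStep_self_le _ e)
  have hcard := (abs_card_sub_card_le_card_symmDiff _ _).trans (Nat.cast_le.mpr hverts)
  rw [card_matchedVerts_greedyMatching, card_matchedVerts_greedyMatching] at hcard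
  rw [abs_le] at hcard ⊢
  push_cast at hcard
  omega

/-- Robustness of greedy matching: deleting a single edge from the stream
changes the size of the greedy matching by at most one. -/
theorem greedy_robust {V : Type*} (G : SimpleGraph V)
    (σ₁ σ₂ : List (Sym2 V)) (e : Sym2 V)
    (hG : ∀ x ∈ σ₁ ++ e :: σ₂, x ∈ G.edgeSet) :
    |((greedyMatching (σ₁ ++ e :: σ₂)).card : ℤ)
      - ((greedyMatching (σ₁ ++ σ₂)).card : ℤ)| ≤ 1 :=
  greedy_robust_general σ₁ σ₂ e
end

section
/- Let G be a finite simple graph, let σ and σ' be finite edge sequences such that σ' is obtained from σ by deleting one edge, and let M and M' be the greedy matchings computed on σ and σ'. Then the symmetric difference M △ M' is a union of vertex-disjoint alternating paths and cycles containing at most one path of non-zero length, and that path (if it exists) contains the deleted edge. -/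
namespace Greedy

open scoped symmDiff

variable {V : Type*}

def matchedVertices (M : Finset (Sym2 V)) : Set V := {v | ∃ f ∈ M, v ∈ f}

def CanAdd (M : Finset (Sym2 V)) (f : Sym2 V) : Prop :=
  ¬ f.IsDiag ∧ ∀ v ∈ f, v ∉ matchedVertices M

def IsMatching (M : Finset (Sym2 V)) : Prop :=
  (∀ f ∈ M, ¬ f.IsDiag) ∧ ∀ f ∈ M, ∀ g ∈ M, ∀ v ∈ f, v ∈ g → f = g

open Classical in
noncomputable def step (M : Finset (Sym2 V)) (f : Sym2 V) : Finset (Sym2 V) :=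
  if ¬ f.IsDiag ∧ ∀ g ∈ M, ∀ v, v ∈ f → v ∉ g then insert f M else M

theorem greedyMatching_eq_foldl (σ : List (Sym2 V)) : greedyMatching σ = σ.foldl step ∅ := rfl

theorem canAdd_iff {M : Finset (Sym2 V)} {f : Sym2 V} :
    CanAdd M f ↔ ¬ f.IsDiag ∧ ∀ g ∈ M, ∀ v, v ∈ f → v ∉ g := by
  simp only [CanAdd, matchedVertices]
  exact and_congr_right fun _ =>
    ⟨fun h g hg v hv hvg => h v hv ⟨g, hg, hvg⟩,
      fun h v hv ⟨g, hg, hvg⟩ => h g hg v hv hvg⟩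

theorem step_of_not_canAdd {M : Finset (Sym2 V)} {f : Sym2 V} (h : ¬ CanAdd M f) :
    step M f = M := by
  rw [step, if_neg (mt canAdd_iff.2 h)]

theorem notMem_of_canAdd {M : Finset (Sym2 V)} {f : Sym2 V} (h : CanAdd M f) : f ∉ M := by
  induction f using Sym2.ind with
  | _ a b => exact fun hf => h.2 a (Sym2.mem_mk_left a b) ⟨_, hf, Sym2.mem_mk_left a b⟩

theorem exists_mem_matchedVertices_of_not_canAdd {M : Finset (Sym2 V)} {f : Sym2 V}
    (hf : ¬ f.IsDiag) (h : ¬ CanAdd M f) : ∃ u ∈ f, u ∈ matchedVertices M := by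
  simpa [CanAdd, hf] using h

theorem IsMatching.subsingleton_partners {M : Finset (Sym2 V)} (hM : IsMatching M) (v : V) :
    {w | s(v, w) ∈ M}.Subsingleton := fun _ h₁ _ h₂ =>
  Sym2.congr_right.1 (hM.2 _ h₁ _ h₂ v (Sym2.mem_mk_left _ _) (Sym2.mem_mk_left _ _))

def defects (M M' : Finset (Sym2 V)) : Set V := matchedVertices M ∆ matchedVertices M'

theorem defects_comm (M M' : Finset (Sym2 V)) : defects M M' = defects M' M := symmDiff_comm _ _

theorem encard_setOf_mem_le_two (e : Sym2 V) : {v | v ∈ e}.encard ≤ 2 := by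
  induction e using Sym2.ind with
  | _ a b =>
    have : {v | v ∈ s(a, b)} = {a, b} := by ext; simp
    rw [this]
    exact (Set.encard_insert_le _ _).trans (by simp [one_add_one_eq_two])

section DecidableEq

variable [DecidableEq V] {M M' : Finset (Sym2 V)} {f e : Sym2 V} {u v w : V}

theorem step_of_canAdd (h : CanAdd M f) : step M f = insert f M := by
  rw [step, if_pos (canAdd_iff.1 h)]
  congr!

theorem mem_matchedVertices_insert :
    v ∈ matchedVertices (insert f M) ↔ v ∈ f ∨ v ∈ matchedVertices M := by
  simp [matchedVertices]

theorem IsMatching.insert (hM : IsMatching M) (hf : CanAdd M f) : IsMatching (insert f M) := by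
  refine ⟨fun g hg => ?_, fun g hg g' hg' v hv hv' => ?_⟩
  · rcases Finset.mem_insert.1 hg with rfl | hg
    exacts [hf.1, hM.1 g hg]
  · rcases Finset.mem_insert.1 hg with rfl | hg <;> rcases Finset.mem_insert.1 hg' with hg'f | hg'
    · exact hg'f.symm
    · exact absurd ⟨g', hg', hv'⟩ (hf.2 v hv)
    · exact absurd ⟨g, hg, hv⟩ (hf.2 v (hg'f ▸ hv'))
    · exact hM.2 g hg g' hg' v hv hv'

theorem IsMatching.step (hM : IsMatching M) : IsMatching (step M f) := by
  by_cases hf : CanAdd M f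
  · rw [step_of_canAdd hf]; exact hM.insert hf
  · rwa [step_of_not_canAdd hf]

theorem isMatching_greedyMatching (σ : List (Sym2 V)) : IsMatching (greedyMatching σ) := by
  rw [greedyMatching_eq_foldl]
  suffices ∀ M : Finset (Sym2 V), IsMatching M → IsMatching (σ.foldl step M) from
    this ∅ ⟨by simp, by simp⟩
  induction σ with
  | nil => exact fun _ h => h
  | cons f σ ih => exact fun _ h => ih _ h.step

noncomputable def symmDiffGraph (M M' : Finset (Sym2 V)) : SimpleGraph V :=
  SimpleGraph.fromEdgeSet ↑(M ∆ M')

theorem symmDiffGraph_comm (M M' : Finset (Sym2 V)) :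
    symmDiffGraph M M' = symmDiffGraph M' M := by
  rw [symmDiffGraph, symmDiff_comm, symmDiffGraph]

theorem symmDiffGraph_reachable_of_mem (he : e ∈ M ∆ M') (hu : u ∈ e) (hw : w ∈ e) :
    (symmDiffGraph M M').Reachable u w := by
  by_cases huw : u = w
  · exact huw ▸ .refl u
  · refine SimpleGraph.Adj.reachable ((SimpleGraph.fromEdgeSet_adj _).2 ⟨?_, huw⟩)
    rwa [← (Sym2.mem_and_mem_iff huw).1 ⟨hu, hw⟩, Finset.mem_coe]

theorem insert_symmDiff_insert (hf : f ∉ M) (hf' : f ∉ M') :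
    insert f M ∆ insert f M' = M ∆ M' := by
  ext g
  by_cases hg : g = f
  · simp [Finset.mem_symmDiff, hg, hf, hf']
  · simp [Finset.mem_symmDiff, hg]

theorem insert_symmDiff (hf : f ∉ M) (hf' : f ∉ M') :
    insert f M ∆ M' = insert f (M ∆ M') := by
  ext g
  by_cases hg : g = f
  · simp [Finset.mem_symmDiff, hg, hf, hf']
  · simp [Finset.mem_symmDiff, hg]

theorem defects_insert_insert (hf : CanAdd M f) (hf' : CanAdd M' f) :
    defects (insert f M) (insert f M') = defects M M' := by
  ext v
  by_cases hv : v ∈ f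
  · simp [defects, Set.mem_symmDiff, mem_matchedVertices_insert, hv, hf.2 v hv, hf'.2 v hv]
  · simp [defects, Set.mem_symmDiff, mem_matchedVertices_insert, hv]

theorem mem_defects_insert (hf : CanAdd M f) :
    v ∈ defects (insert f M) M' ↔
      v ∈ f ∧ v ∉ matchedVertices M' ∨ v ∉ f ∧ v ∈ defects M M' := by
  by_cases hv : v ∈ f
  · simp [defects, Set.mem_symmDiff, mem_matchedVertices_insert, hv, hf.2 v hv]
  · simp [defects, Set.mem_symmDiff, mem_matchedVertices_insert, hv]

theorem encard_defects_insert_le (hf : CanAdd M f) (hu : u ∈ f)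
    (huM' : u ∈ matchedVertices M') :
    (defects (insert f M) M').encard ≤ (defects M M').encard := by
  have hu_def : u ∈ defects M M' := Or.inr ⟨huM', hf.2 u hu⟩
  have hsub : defects (insert f M) M' ⊆ insert (Sym2.Mem.other hu) (defects M M' \ {u}) := by
    intro v hv
    rcases (mem_defects_insert hf).1 hv with ⟨hvf, hvM'⟩ | ⟨hvf, hv⟩
    · rw [← Sym2.other_spec hu, Sym2.mem_iff] at hvf
      rcases hvf with rfl | rfl
      exacts [absurd huM' hvM', Set.mem_insert _ _]
    · exact Or.inr ⟨hv, fun hvu => hvf (hvu ▸ hu)⟩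
  calc (defects (insert f M) M').encard
      ≤ (insert (Sym2.Mem.other hu) (defects M M' \ {u})).encard := Set.encard_le_encard hsub
    _ ≤ (defects M M' \ {u}).encard + 1 := Set.encard_insert_le _ _
    _ = (defects M M').encard := Set.encard_sdiff_singleton_add_one hu_def

theorem defects_insert_eq_empty (h : (defects M M').encard ≤ 2) (hf : CanAdd M f)
    (hfM' : f ∈ M') : defects (insert f M) M' = ∅ := by
  obtain ⟨u, w, huw, rfl⟩ : ∃ u w, u ≠ w ∧ s(u, w) = f := by
    induction f using Sym2.ind with
    | _ u w => exact ⟨u, w, fun h => hf.1 (Sym2.mk_isDiag_iff.2 h), rfl⟩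
  have hdef : ∀ x ∈ s(u, w), x ∈ defects M M' := fun x hx =>
    Or.inr ⟨⟨_, hfM', hx⟩, hf.2 x hx⟩
  have hpair : {u, w} = defects M M' :=
    (Set.toFinite _).eq_of_subset_of_encard_le
      (Set.insert_subset_iff.2 ⟨hdef u (Sym2.mem_mk_left u w),
        Set.singleton_subset_iff.2 (hdef w (Sym2.mem_mk_right u w))⟩)
      (h.trans (Set.encard_pair huw).ge)
  refine Set.eq_empty_of_forall_notMem fun v hv => ?_
  rcases (mem_defects_insert hf).1 hv with ⟨hvf, hvM'⟩ | ⟨hvf, hv⟩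
  · exact hvM' ⟨_, hfM', hvf⟩
  · rw [← hpair] at hv
    rcases hv with rfl | rfl
    exacts [hvf (Sym2.mem_mk_left _ _), hvf (Sym2.mem_mk_right _ _)]

def AnchoredAt (e : Sym2 V) (M M' : Finset (Sym2 V)) : Prop :=
  (defects M M').encard ≤ 2 ∧
    ∀ u ∈ defects M M', e ∈ M ∆ M' ∧ ∀ w ∈ e, (symmDiffGraph M M').Reachable u w

theorem anchoredAt_comm : AnchoredAt e M M' ↔ AnchoredAt e M' M := by
  rw [AnchoredAt, AnchoredAt, defects_comm, symmDiffGraph_comm, symmDiff_comm M]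

theorem anchoredAt_of_defects_eq_empty (h : defects M M' = ∅) : AnchoredAt e M M' := by
  simp [AnchoredAt, h]

theorem AnchoredAt.reachable (h : AnchoredAt e M M') (hu : u ∈ defects M M')
    (hv : v ∈ defects M M') : (symmDiffGraph M M').Reachable u v :=
  ((h.2 u hu).2 _ e.out_fst_mem).trans ((h.2 v hv).2 _ e.out_fst_mem).symm

theorem AnchoredAt.insert_insert (h : AnchoredAt e M M') (hf : CanAdd M f) (hf' : CanAdd M' f) :
    AnchoredAt e (insert f M) (insert f M') := by
  simpa only [AnchoredAt, symmDiffGraph, defects_insert_insert hf hf',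
    insert_symmDiff_insert (notMem_of_canAdd hf) (notMem_of_canAdd hf')] using h

theorem AnchoredAt.insert_left (h : AnchoredAt e M M') (hf : CanAdd M f) (hf' : ¬ CanAdd M' f) :
    AnchoredAt e (insert f M) M' := by
  by_cases hfM' : f ∈ M'
  · exact anchoredAt_of_defects_eq_empty (defects_insert_eq_empty h.1 hf hfM')
  obtain ⟨u, hu, huM'⟩ := exists_mem_matchedVertices_of_not_canAdd hf.1 hf'
  obtain ⟨he, hreach⟩ := h.2 u (Or.inr ⟨huM', hf.2 u hu⟩)
  have hsd := insert_symmDiff (notMem_of_canAdd hf) hfM'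
  have hle : symmDiffGraph M M' ≤ symmDiffGraph (insert f M) M' :=
    SimpleGraph.fromEdgeSet_mono (by rw [hsd]; exact_mod_cast Finset.subset_insert f _)
  refine ⟨(encard_defects_insert_le hf hu huM').trans h.1,
    fun v hv => ⟨hsd ▸ Finset.mem_insert_of_mem he, fun w hw => ?_⟩⟩
  rcases (mem_defects_insert hf).1 hv with ⟨hvf, -⟩ | ⟨-, hv⟩
  · exact (symmDiffGraph_reachable_of_mem (hsd ▸ Finset.mem_insert_self f _) hvf hu).trans
      ((hreach w hw).mono hle)
  · exact ((h.2 v hv).2 w hw).mono hle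

theorem AnchoredAt.step_step (h : AnchoredAt e M M') : AnchoredAt e (step M f) (step M' f) := by
  by_cases hf : CanAdd M f <;> by_cases hf' : CanAdd M' f
  · rw [step_of_canAdd hf, step_of_canAdd hf']
    exact h.insert_insert hf hf'
  · rw [step_of_canAdd hf, step_of_not_canAdd hf']
    exact h.insert_left hf hf'
  · rw [step_of_not_canAdd hf, step_of_canAdd hf', anchoredAt_comm]
    exact (anchoredAt_comm.1 h).insert_left hf' hf
  · rwa [step_of_not_canAdd hf, step_of_not_canAdd hf']

theorem AnchoredAt.foldl_step (h : AnchoredAt e M M') (σ : List (Sym2 V)) :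
    AnchoredAt e (σ.foldl step M) (σ.foldl step M') := by
  induction σ generalizing M M' with
  | nil => exact h
  | cons f σ ih => exact ih h.step_step

theorem anchoredAt_step_self (M : Finset (Sym2 V)) : AnchoredAt e (step M e) M := by
  by_cases he : CanAdd M e
  · rw [step_of_canAdd he]
    have hsd : insert e M ∆ M = {e} := by
      rw [insert_symmDiff (notMem_of_canAdd he) (notMem_of_canAdd he), symmDiff_self]
      rfl
    have hdef : defects (insert e M) M ⊆ {v | v ∈ e} := fun v hv => by
      rcases (mem_defects_insert he).1 hv with ⟨hv, -⟩ | ⟨-, hv⟩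
      · exact hv
      · simp [defects] at hv
    refine ⟨(Set.encard_le_encard hdef).trans (encard_setOf_mem_le_two e), fun v hv => ?_⟩
    have he' : e ∈ insert e M ∆ M := by simp [hsd]
    exact ⟨he', fun w hw => symmDiffGraph_reachable_of_mem he' (hdef hv) hw⟩
  · rw [step_of_not_canAdd he]
    exact anchoredAt_of_defects_eq_empty (symmDiff_self _)

theorem IsMatching.ncard_adj_symmDiffGraph_le_two (hM : IsMatching M) (hM' : IsMatching M')
    (v : V) : {w | (symmDiffGraph M M').Adj v w}.ncard ≤ 2 := by
  have hsub : {w | (symmDiffGraph M M').Adj v w} ⊆ {w | s(v, w) ∈ M} ∪ {w | s(v, w) ∈ M'} :=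
    fun w hw => by
      have := ((SimpleGraph.fromEdgeSet_adj _).1 hw).1
      rw [Finset.mem_coe, Finset.mem_symmDiff] at this
      exact this.imp And.left And.left
  have h₁ := hM.subsingleton_partners v
  have h₂ := hM'.subsingleton_partners v
  calc {w | (symmDiffGraph M M').Adj v w}.ncard
      ≤ ({w | s(v, w) ∈ M} ∪ {w | s(v, w) ∈ M'}).ncard :=
        Set.ncard_le_ncard hsub (h₁.finite.union h₂.finite)
    _ ≤ {w | s(v, w) ∈ M}.ncard + {w | s(v, w) ∈ M'}.ncard := Set.ncard_union_le _ _
    _ ≤ 1 + 1 := add_le_add ((Set.ncard_le_one h₁.finite).2 fun _ ha _ hb => h₁ ha hb)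
        ((Set.ncard_le_one h₂.finite).2 fun _ ha _ hb => h₂ ha hb)

theorem IsMatching.notMem_matchedVertices_of_forall_adj_eq (hM : IsMatching M)
    (hM' : IsMatching M') (hvw : s(v, w) ∈ M) (hvw' : s(v, w) ∉ M')
    (huniq : ∀ z, (symmDiffGraph M M').Adj v z → z = w) : v ∉ matchedVertices M' := by
  rintro ⟨g, hg, hvg⟩
  by_cases hgM : g ∈ M
  · exact hvw' (hM.2 _ hvw g hgM v (Sym2.mem_mk_left v w) hvg ▸ hg)
  · have hadj : (symmDiffGraph M M').Adj v (Sym2.Mem.other hvg) := by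
      refine (SimpleGraph.fromEdgeSet_adj _).2 ⟨?_, (Sym2.other_ne (hM'.1 g hg) hvg).symm⟩
      rw [Sym2.other_spec hvg, Finset.mem_coe, Finset.mem_symmDiff]
      exact Or.inr ⟨hg, hgM⟩
    have hgvw : g = s(v, w) := by rw [← Sym2.other_spec hvg, huniq _ hadj]
    exact hvw' (hgvw ▸ hg)

theorem mem_defects_of_ncard_adj_eq_one (hM : IsMatching M) (hM' : IsMatching M')
    (h : {w | (symmDiffGraph M M').Adj v w}.ncard = 1) : v ∈ defects M M' := by
  obtain ⟨w, hw⟩ := Set.ncard_eq_one.1 h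
  have huniq : ∀ z, (symmDiffGraph M M').Adj v z → z = w := fun z hz =>
    Set.mem_singleton_iff.1 (hw ▸ hz)
  have hadj : (symmDiffGraph M M').Adj v w := (Set.ext_iff.1 hw w).2 rfl
  rcases Finset.mem_symmDiff.1 ((SimpleGraph.fromEdgeSet_adj _).1 hadj).1
    with ⟨h₁, h₂⟩ | ⟨h₁, h₂⟩
  · exact Or.inl ⟨⟨_, h₁, Sym2.mem_mk_left v w⟩,
      hM.notMem_matchedVertices_of_forall_adj_eq hM' h₁ h₂ huniq⟩
  · rw [symmDiffGraph_comm] at huniq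
    exact Or.inr ⟨⟨_, h₁, Sym2.mem_mk_left v w⟩,
      hM'.notMem_matchedVertices_of_forall_adj_eq hM h₁ h₂ huniq⟩

end DecidableEq

end Greedy

open Greedy in
theorem greedy_symmdiff_structure_general {V : Type*} [DecidableEq V]
    (σ₁ σ₂ : List (Sym2 V)) (e : Sym2 V)
    (M M' : Finset (Sym2 V))
    (hM : M = greedyMatching (σ₁ ++ e :: σ₂))
    (hM' : M' = greedyMatching (σ₁ ++ σ₂))
    (H : SimpleGraph V)
    (hH : H = SimpleGraph.fromEdgeSet (((M \ M') ∪ (M' \ M) : Finset (Sym2 V)) : Set (Sym2 V))) :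
    (∀ v : V, {w | H.Adj v w}.ncard ≤ 2) ∧
    (∀ u v : V, {w | H.Adj u w}.ncard = 1 → {w | H.Adj v w}.ncard = 1 →
      H.Reachable u v) ∧
    (∀ u : V, {w | H.Adj u w}.ncard = 1 →
      e ∈ (M \ M') ∪ (M' \ M) ∧ ∀ w, w ∈ e → H.Reachable u w) := by
  have hMmatch : IsMatching M := hM ▸ isMatching_greedyMatching _
  have hM'match : IsMatching M' := hM' ▸ isMatching_greedyMatching _
  have hanch : AnchoredAt e M M' := by
    rw [hM, hM', greedyMatching_eq_foldl, greedyMatching_eq_foldl, List.foldl_append,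
      List.foldl_append, List.foldl_cons]
    exact (anchoredAt_step_self _).foldl_step σ₂
  subst hH
  have hdefect (v : V) := mem_defects_of_ncard_adj_eq_one (v := v) hMmatch hM'match
  exact ⟨hMmatch.ncard_adj_symmDiffGraph_le_two hM'match,
    fun u v hu hv => hanch.reachable (hdefect u hu) (hdefect v hv),
    fun u hu => hanch.2 u (hdefect u hu)⟩

/-- Structure of the symmetric difference of greedy matchings on streams
differing in one edge: every vertex has degree at most 2 (so the symmetric
difference is a vertex-disjoint union of alternating paths and cycles), all
degree-one vertices lie in a single connected component (at most one path of
non-zero length), and any path of non-zero length contains the deleted edge. -/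
theorem greedy_symmdiff_structure {V : Type*} [DecidableEq V] (G : SimpleGraph V)
    (σ₁ σ₂ : List (Sym2 V)) (e : Sym2 V)
    (hG : ∀ x ∈ σ₁ ++ e :: σ₂, x ∈ G.edgeSet)
    (M M' : Finset (Sym2 V))
    (hM : M = greedyMatching (σ₁ ++ e :: σ₂))
    (hM' : M' = greedyMatching (σ₁ ++ σ₂))
    (H : SimpleGraph V)
    (hH : H = SimpleGraph.fromEdgeSet (((M \ M') ∪ (M' \ M) : Finset (Sym2 V)) : Set (Sym2 V))) :
    (∀ v : V, {w | H.Adj v w}.ncard ≤ 2) ∧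
    (∀ u v : V, {w | H.Adj u w}.ncard = 1 → {w | H.Adj v w}.ncard = 1 →
      H.Reachable u v) ∧
    (∀ u : V, {w | H.Adj u w}.ncard = 1 →
      e ∈ (M \ M') ∪ (M' \ M) ∧ ∀ w, w ∈ e → H.Reachable u w) :=
  greedy_symmdiff_structure_general σ₁ σ₂ e M M' hM hM' H hH
end

section
/- Let G be a finite simple graph, let M* be a maximum matching of G, let M be a maximal matching of G, and let α > 0 satisfy |M| ≤ (1/2 + α)·|M*|. Then the number of edges of M that lie on some augmenting path of length 3 with respect to M (a path whose first and last edges are in M* and whose middle edge is in M) is at least (1/2 − 3α)·|M*|; equivalently, the number of non-3-augmentable edges of M is at most 4α·|M*|. -/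
/-- `M` is a matching of the graph `G`: a set of edges of `G` that are
pairwise vertex-disjoint. -/
def IsMatchingSet {V : Type*} (G : SimpleGraph V) (M : Set (Sym2 V)) : Prop :=
  M ⊆ G.edgeSet ∧ ∀ e ∈ M, ∀ f ∈ M, e ≠ f → ∀ v, v ∈ e → v ∉ f

/-- `M` is a maximal matching: no edge of `G` can be added to it. -/
def IsMaximalMatchingSet {V : Type*} (G : SimpleGraph V) (M : Set (Sym2 V)) : Prop :=
  IsMatchingSet G M ∧ ∀ e ∈ G.edgeSet, e ∉ M → ¬ IsMatchingSet G (insert e M)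

/-- `M` is a maximum matching: a matching of maximum cardinality. -/
def IsMaximumMatchingSet {V : Type*} (G : SimpleGraph V) (M : Set (Sym2 V)) : Prop :=
  IsMatchingSet G M ∧ ∀ M', IsMatchingSet G M' → M'.ncard ≤ M.ncard

/-- `e` (an edge of `M`) is 3-augmentable with respect to `Mstar` and `M`:
it is the middle edge of a length-3 augmenting path `w-x-y-z` whose first and
last edges belong to `Mstar` and whose endpoints are unmatched by `M`. -/
def ThreeAugmentable {V : Type*} (Mstar M : Set (Sym2 V)) (e : Sym2 V) : Prop :=
  ∃ w x y z : V, e = s(x, y) ∧ s(w, x) ∈ Mstar ∧ s(y, z) ∈ Mstar ∧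
    w ≠ x ∧ w ≠ y ∧ w ≠ z ∧ x ≠ y ∧ x ≠ z ∧ y ≠ z ∧
    (∀ f ∈ M, w ∉ f) ∧ (∀ f ∈ M, z ∉ f)

section Auxiliary

variable {V : Type*}

/-- two edges of a matching sharing a vertex are equal -/
private lemma matching_eq_of_mem {G : SimpleGraph V} {S : Set (Sym2 V)}
    (h : IsMatchingSet G S) {e f : Sym2 V} (he : e ∈ S) (hf : f ∈ S) {v : V}
    (hve : v ∈ e) (hvf : v ∈ f) : e = f := by
  by_contra hne
  exact h.2 e he f hf hne v hve hvf

private lemma sym2_mem_cases {e : Sym2 V} {u v w : V}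
    (hu : u ∈ e) (hv : v ∈ e) (hw : w ∈ e) (huv : u ≠ v) : w = u ∨ w = v := by
  induction e using Sym2.ind with
  | _ a b => simp only [Sym2.mem_iff] at hu hv hw ⊢; aesop

open Classical in
/-- choose a vertex of `e` satisfying `Q e`, if possible -/
private noncomputable def pick (Q : Sym2 V → V → Prop) (e : Sym2 V) : V :=
  if h : ∃ v, v ∈ e ∧ Q e v then h.choose else e.out.1

private lemma pick_mem (Q : Sym2 V → V → Prop) (e : Sym2 V) : pick Q e ∈ e := by
  classical
  rw [pick]
  split
  · next h => exact h.choose_spec.1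
  · exact e.out_fst_mem

private lemma pick_spec {Q : Sym2 V → V → Prop} {e : Sym2 V}
    (h : ∃ v, v ∈ e ∧ Q e v) : Q e (pick Q e) := by
  classical
  rw [pick, dif_pos h]
  exact h.choose_spec.2

/-- a canonical vertex of an edge -/
private noncomputable def pone : Sym2 V → V := pick (fun _ _ => True)

private lemma pone_mem (e : Sym2 V) : pone e ∈ e := pick_mem _ e

/-- a vertex of an edge different from `pone e`, if one exists -/
private noncomputable def ptwo : Sym2 V → V := pick (fun e v => v ≠ pone e)

private lemma ptwo_mem (e : Sym2 V) : ptwo e ∈ e := pick_mem _ e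

private lemma ptwo_spec {e : Sym2 V} (h : ∃ v, v ∈ e ∧ v ≠ pone e) :
    ptwo e ≠ pone e :=
  pick_spec (Q := fun e v => v ≠ pone e) h

/-- a vertex of `e` matched by `M` whose `e`-partner is `M`-free, if one exists -/
private noncomputable def theta (M : Set (Sym2 V)) : Sym2 V → V :=
  pick (fun e v => (∃ f ∈ M, v ∈ f) ∧ ∃ w, e = s(v, w) ∧ ∀ f ∈ M, w ∉ f)

private lemma theta_mem (M : Set (Sym2 V)) (e : Sym2 V) : theta M e ∈ e := pick_mem _ e

private lemma theta_spec {M : Set (Sym2 V)} {e : Sym2 V}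
    (h : ∃ v, v ∈ e ∧ ((∃ f ∈ M, v ∈ f) ∧ ∃ w, e = s(v, w) ∧ ∀ f ∈ M, w ∉ f)) :
    (∃ f ∈ M, theta M e ∈ f) ∧ ∃ w, e = s(theta M e, w) ∧ ∀ f ∈ M, w ∉ f :=
  pick_spec (Q := fun e v => (∃ f ∈ M, v ∈ f) ∧ ∃ w, e = s(v, w) ∧ ∀ f ∈ M, w ∉ f) h

open Classical in
/-- choose an edge of `M` containing `v`, if possible -/
private noncomputable def pickEdge (M : Set (Sym2 V)) (v : V) : Sym2 V :=
  if h : ∃ f, f ∈ M ∧ v ∈ f then h.choose else s(v, v)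

private lemma pickEdge_spec {M : Set (Sym2 V)} {v : V}
    (h : ∃ f ∈ M, v ∈ f) : pickEdge M v ∈ M ∧ v ∈ pickEdge M v := by
  classical
  rw [pickEdge, dif_pos h]
  exact h.choose_spec

/-- a set of vertices covered by a set of edges has at most twice as many elements -/
private lemma ncard_le_two_mul [Finite V] {S : Set V} {F : Set (Sym2 V)}
    (h : ∀ v ∈ S, ∃ e ∈ F, v ∈ e) : S.ncard ≤ 2 * F.ncard := by
  classical
  have hsub : S ⊆ pone '' F ∪ ptwo '' F := by
    intro v hv
    obtain ⟨e, heF, hve⟩ := h v hv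
    by_cases hv1 : v = pone e
    · exact Or.inl ⟨e, heF, hv1.symm⟩
    · have hsp : ptwo e ≠ pone e := ptwo_spec ⟨v, hve, hv1⟩
      rcases sym2_mem_cases (pone_mem e) (ptwo_mem e) hve hsp.symm with h1 | h1
      · exact absurd h1 hv1
      · exact Or.inr ⟨e, heF, h1.symm⟩
  calc S.ncard ≤ (pone '' F ∪ ptwo '' F).ncard := Set.ncard_le_ncard hsub (Set.toFinite _)
    _ ≤ (pone '' F).ncard + (ptwo '' F).ncard := Set.ncard_union_le _ _
    _ ≤ F.ncard + F.ncard := add_le_add (Set.ncard_image_le (Set.toFinite _))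
        (Set.ncard_image_le (Set.toFinite _))
    _ = 2 * F.ncard := (two_mul _).symm

end Auxiliary

/-- Lemma 1 of Konrad–Magniez–Mathieu: if a maximal matching `M` satisfies
`|M| ≤ (1/2 + α)|M*|`, then at least `(1/2 - 3α)|M*|` of its edges are
3-augmentable and at most `4α|M*|` are not. -/
theorem konrad_lemma {V : Type*} [Fintype V] (G : SimpleGraph V)
    (Mstar M : Set (Sym2 V)) (α : ℝ) (hα : 0 < α)
    (hmaxm : IsMaximumMatchingSet G Mstar)
    (hmaxl : IsMaximalMatchingSet G M)
    (hcard : (M.ncard : ℝ) ≤ (1 / 2 + α) * (Mstar.ncard : ℝ)) :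
    ((({e ∈ M | ThreeAugmentable Mstar M e}).ncard : ℝ)
        ≥ (1 / 2 - 3 * α) * (Mstar.ncard : ℝ)) ∧
    ((({e ∈ M | ¬ ThreeAugmentable Mstar M e}).ncard : ℝ)
        ≤ 4 * α * (Mstar.ncard : ℝ)) := by
  classical
  have hMstar : IsMatchingSet G Mstar := hmaxm.1
  have hM : IsMatchingSet G M := hmaxl.1
  set A : Set (Sym2 V) := {e ∈ M | ThreeAugmentable Mstar M e} with hA
  set N : Set (Sym2 V) := {e ∈ M | ¬ ThreeAugmentable Mstar M e} with hN
  -- the sets of Mstar-edges with exactly one / both endpoints matched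
  set ET : Set (Sym2 V) :=
    {e ∈ Mstar | ∃ v w, e = s(v, w) ∧ (∃ f ∈ M, v ∈ f) ∧ ∀ f ∈ M, w ∉ f} with hET
  set E2 : Set (Sym2 V) := {e ∈ Mstar | ∀ v ∈ e, ∃ f ∈ M, v ∈ f} with hE2
  set T : Set V := {v | (∃ f ∈ M, v ∈ f) ∧ ∃ w, s(v, w) ∈ Mstar ∧ ∀ f ∈ M, w ∉ f} with hT
  set MF : Set V := {v | ∃ f ∈ M, v ∈ f} with hMF
  -- every Mstar-edge has a matched endpoint (maximality of M)
  have hcover : Mstar ⊆ ET ∪ E2 := by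
    intro e he
    induction e using Sym2.ind with
    | _ a b =>
      by_cases ha : ∃ f ∈ M, a ∈ f
      · by_cases hb : ∃ f ∈ M, b ∈ f
        · exact Or.inr ⟨he, fun v hv => by
            rcases Sym2.mem_iff.1 hv with rfl | rfl
            exacts [ha, hb]⟩
        · exact Or.inl ⟨he, a, b, rfl, ha, fun f hf hbf => hb ⟨f, hf, hbf⟩⟩
      · by_cases hb : ∃ f ∈ M, b ∈ f
        · exact Or.inl ⟨he, b, a, Sym2.eq_swap, hb, fun f hf haf => ha ⟨f, hf, haf⟩⟩
        · exfalso
          have heG : s(a, b) ∈ G.edgeSet := hMstar.1 he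
          have heM : s(a, b) ∉ M := fun hm => ha ⟨_, hm, Sym2.mem_mk_left a b⟩
          apply hmaxl.2 _ heG heM
          constructor
          · intro x hx
            rcases Set.mem_insert_iff.1 hx with rfl | hx
            exacts [heG, hM.1 hx]
          · intro e1 he1 e2 he2 hne u hu1 hu2
            rcases Set.mem_insert_iff.1 he1 with h1 | h1 <;>
              rcases Set.mem_insert_iff.1 he2 with h2 | h2
            · exact hne (h1.trans h2.symm)
            · rw [h1] at hu1
              rcases Sym2.mem_iff.1 hu1 with h3 | h3
              · exact ha ⟨e2, h2, h3 ▸ hu2⟩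
              · exact hb ⟨e2, h2, h3 ▸ hu2⟩
            · rw [h2] at hu2
              rcases Sym2.mem_iff.1 hu2 with h3 | h3
              · exact ha ⟨e1, h1, h3 ▸ hu1⟩
              · exact hb ⟨e1, h1, h3 ▸ hu1⟩
            · exact hM.2 e1 h1 e2 h2 hne u hu1 hu2
  have hdisj : Disjoint ET E2 := by
    rw [Set.disjoint_left]
    rintro e ⟨heMs, v, w, rfl, hv, hw⟩ ⟨_, hall⟩
    obtain ⟨f, hf, hwf⟩ := hall w (Sym2.mem_mk_right v w)
    exact hw f hf hwf
  have hunion : Mstar = ET ∪ E2 := by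
    apply Set.Subset.antisymm hcover
    rintro e (he | he)
    exacts [he.1, he.1]
  -- the choice function θ on ET
  have hθ : ∀ e ∈ ET, (∃ f ∈ M, theta M e ∈ f) ∧
      ∃ w, e = s(theta M e, w) ∧ ∀ f ∈ M, w ∉ f := by
    rintro e ⟨heMs, v, w, heq, hv, hw⟩
    exact theta_spec ⟨v, by rw [heq]; exact Sym2.mem_mk_left v w, hv, w, heq, hw⟩
  have hθinj : Set.InjOn (theta M) ET := by
    intro e he e' he' heq
    exact matching_eq_of_mem hMstar he.1 he'.1 (heq ▸ theta_mem M e) (theta_mem M e')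
  have hp2spec : ∀ e ∈ E2, ptwo e ≠ pone e := by
    intro e he
    have heG : e ∈ G.edgeSet := hMstar.1 he.1
    have hnd : ¬ e.IsDiag := G.not_isDiag_of_mem_edgeSet heG
    apply ptwo_spec
    induction e using Sym2.ind with
    | _ a b =>
      have hab : a ≠ b := by
        intro h; exact hnd (by simp [h, Sym2.mk_isDiag_iff])
      by_cases h : a = pone s(a, b)
      · exact ⟨b, Sym2.mem_mk_right a b, fun hb => hab (h.trans hb.symm)⟩
      · exact ⟨a, Sym2.mem_mk_left a b, h⟩
  -- |ET| + 2|E2| ≤ |MF| ≤ 2|M|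
  have hMF2l : MF.ncard ≤ 2 * M.ncard := ncard_le_two_mul (fun v hv => hv)
  have hI1sub : theta M '' ET ⊆ MF := by
    rintro v ⟨e, he, rfl⟩; exact (hθ e he).1
  have hI2sub : pone '' E2 ⊆ MF := by
    rintro v ⟨e, he, rfl⟩; exact he.2 _ (pone_mem e)
  have hI3sub : ptwo '' E2 ⊆ MF := by
    rintro v ⟨e, he, rfl⟩; exact he.2 _ (ptwo_mem e)
  have hp1inj : Set.InjOn pone E2 := by
    intro e he e' he' heq
    exact matching_eq_of_mem hMstar he.1 he'.1 (heq ▸ pone_mem e) (pone_mem e')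
  have hp2inj : Set.InjOn ptwo E2 := by
    intro e he e' he' heq
    exact matching_eq_of_mem hMstar he.1 he'.1 (heq ▸ ptwo_mem e) (ptwo_mem e')
  have hd12 : Disjoint (theta M '' ET) (pone '' E2) := by
    rw [Set.disjoint_left]
    rintro v ⟨e, he, rfl⟩ ⟨e', he', heq⟩
    have : e = e' := matching_eq_of_mem hMstar he.1 he'.1 (theta_mem M e)
      (heq.symm ▸ pone_mem e')
    exact Set.disjoint_left.1 hdisj he (this ▸ he')
  have hd13 : Disjoint (theta M '' ET) (ptwo '' E2) := by
    rw [Set.disjoint_left]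
    rintro v ⟨e, he, rfl⟩ ⟨e', he', heq⟩
    have : e = e' := matching_eq_of_mem hMstar he.1 he'.1 (theta_mem M e)
      (heq.symm ▸ ptwo_mem e')
    exact Set.disjoint_left.1 hdisj he (this ▸ he')
  have hd23 : Disjoint (pone '' E2) (ptwo '' E2) := by
    rw [Set.disjoint_left]
    rintro v ⟨e, he, rfl⟩ ⟨e', he', heq⟩
    have hee' : e = e' := matching_eq_of_mem hMstar he.1 he'.1 (pone_mem e)
      (heq.symm ▸ ptwo_mem e')
    subst hee'
    exact hp2spec e he heq
  have hcount2 : ET.ncard + 2 * E2.ncard ≤ 2 * M.ncard := by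
    have hle : (theta M '' ET ∪ (pone '' E2 ∪ ptwo '' E2)).ncard ≤ MF.ncard :=
      Set.ncard_le_ncard (Set.union_subset hI1sub (Set.union_subset hI2sub hI3sub))
        (Set.toFinite _)
    have he1 : (theta M '' ET ∪ (pone '' E2 ∪ ptwo '' E2)).ncard
        = (theta M '' ET).ncard + ((pone '' E2).ncard + (ptwo '' E2).ncard) := by
      rw [Set.ncard_union_eq (Set.disjoint_union_right.2 ⟨hd12, hd13⟩)
        (Set.toFinite _) (Set.toFinite _),
        Set.ncard_union_eq hd23 (Set.toFinite _) (Set.toFinite _)]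
    rw [he1, Set.ncard_image_of_injOn hθinj, Set.ncard_image_of_injOn hp1inj,
      Set.ncard_image_of_injOn hp2inj] at hle
    omega
  -- |Mstar| = |ET| + |E2|
  have hcount1 : ET.ncard + E2.ncard = Mstar.ncard := by
    rw [hunion, Set.ncard_union_eq hdisj (Set.toFinite _) (Set.toFinite _)]
  -- |ET| ≤ |T|
  have hcount3 : ET.ncard ≤ T.ncard := by
    apply Set.ncard_le_ncard_of_injOn (theta M) _ hθinj (Set.toFinite _)
    intro e he
    obtain ⟨hmat, w, heq, hw⟩ := hθ e he
    exact ⟨hmat, w, heq ▸ he.1, hw⟩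
  -- |T| ≤ 2|A| + |N|
  set TA : Set V := {v ∈ T | ∃ f ∈ A, v ∈ f} with hTA
  set TN : Set V := T \ TA with hTN
  have hTAcard : TA.ncard ≤ 2 * A.ncard := ncard_le_two_mul (fun v hv => hv.2)
  have hTNcard : TN.ncard ≤ N.ncard := by
    apply Set.ncard_le_ncard_of_injOn (pickEdge M)
    · rintro v ⟨hvT, hvnTA⟩
      obtain ⟨hvM, w, hwMs, hwfree⟩ := hvT
      obtain ⟨hfM, hvf⟩ := pickEdge_spec hvM
      exact ⟨hfM, fun haug =>
        hvnTA ⟨⟨hvM, w, hwMs, hwfree⟩, pickEdge M v, ⟨hfM, haug⟩, hvf⟩⟩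
    · -- injectivity: two matched T-vertices on a common M-edge make it 3-augmentable
      intro v hv v' hv' heq
      by_contra hne
      obtain ⟨hvT, hvnTA⟩ := hv
      obtain ⟨hv'T, hv'nTA⟩ := hv'
      obtain ⟨hvM, w, hwMs, hwfree⟩ := hvT
      obtain ⟨hv'M, w', hw'Ms, hw'free⟩ := hv'T
      obtain ⟨hfM', hvf⟩ := pickEdge_spec hvM
      obtain ⟨hfM, hv'f⟩ := pickEdge_spec hv'M
      rw [heq] at hvf
      have hfeq : pickEdge M v' = s(v, v') := (Sym2.mem_and_mem_iff hne).1 ⟨hvf, hv'f⟩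
      have hwv : w ≠ v :=
        fun h => ((SimpleGraph.mem_edgeSet G).1 (hMstar.1 hwMs)).ne h.symm
      have hwv' : w ≠ v' := fun h => hwfree _ hfM (by rw [h]; exact hv'f)
      have hww' : w ≠ w' := by
        intro h
        by_cases hedge : s(v, w) = s(v', w')
        · have hv'mem : v' ∈ s(v, w) := by rw [hedge]; exact Sym2.mem_mk_left v' w'
          rcases Sym2.mem_iff.1 hv'mem with h1 | h1
          · exact hne h1.symm
          · exact hwfree _ hfM (by rw [← h1]; exact hv'f)
        · exact hMstar.2 _ hwMs _ hw'Ms hedge w (Sym2.mem_mk_right v w)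
            (by rw [h]; exact Sym2.mem_mk_right v' w')
      have hvw' : v ≠ w' := fun h => hw'free _ hfM (by rw [← h]; exact hvf)
      have hv'w' : v' ≠ w' := ((SimpleGraph.mem_edgeSet G).1 (hMstar.1 hw'Ms)).ne
      have haug : ThreeAugmentable Mstar M (pickEdge M v') :=
        ⟨w, v, v', w', hfeq, Sym2.eq_swap ▸ hwMs, hw'Ms,
          hwv, hwv', hww', hne, hvw', hv'w', hwfree, hw'free⟩
      exact hv'nTA ⟨⟨hv'M, w', hw'Ms, hw'free⟩, pickEdge M v', ⟨hfM, haug⟩, hv'f⟩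
  have hcount4 : T.ncard ≤ 2 * A.ncard + N.ncard := by
    have hsplit : T ⊆ TA ∪ TN := by
      intro v hv
      by_cases h : v ∈ TA
      · exact Or.inl h
      · exact Or.inr ⟨hv, h⟩
    calc T.ncard ≤ (TA ∪ TN).ncard := Set.ncard_le_ncard hsplit (Set.toFinite _)
      _ ≤ TA.ncard + TN.ncard := Set.ncard_union_le _ _
      _ ≤ 2 * A.ncard + N.ncard := add_le_add hTAcard hTNcard
  -- |A| + |N| = |M|
  have hcount5 : A.ncard + N.ncard = M.ncard := by
    have hANdisj : Disjoint A N := by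
      rw [Set.disjoint_left]
      rintro e ⟨_, haug⟩ ⟨_, hnaug⟩
      exact hnaug haug
    have hAN : A ∪ N = M := by
      ext e
      constructor
      · rintro (he | he)
        exacts [he.1, he.1]
      · intro he
        by_cases h : ThreeAugmentable Mstar M e
        · exact Or.inl ⟨he, h⟩
        · exact Or.inr ⟨he, h⟩
    rw [← hAN, Set.ncard_union_eq hANdisj (Set.toFinite _) (Set.toFinite _)]
  -- combine: 2|Mstar| ≤ |A| + 3|M|
  have hkey : 2 * Mstar.ncard ≤ A.ncard + 3 * M.ncard := by omega
  -- pass to the reals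
  have hkeyR : 2 * (Mstar.ncard : ℝ) ≤ (A.ncard : ℝ) + 3 * (M.ncard : ℝ) := by
    exact_mod_cast hkey
  have hNR : (N.ncard : ℝ) = (M.ncard : ℝ) - (A.ncard : ℝ) := by
    have h := hcount5
    have : (A.ncard : ℝ) + (N.ncard : ℝ) = (M.ncard : ℝ) := by exact_mod_cast h
    linarith
  constructor
  · nlinarith [hkeyR, hcard]
  · rw [hNR]
    nlinarith [hkeyR, hcard]
end

section
/- For every real t ∈ (0,1] and integer k ≥ 2, k·(1 − t/k)^k − (k−1)·(1 − t/(k−1))^k ≥ 0. -/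
theorem monotoneOn_mul_one_sub_div_pow {t : ℝ} (ht : 0 < t) (n : ℕ) :
    MonotoneOn (fun x : ℝ => x * (1 - t / x) ^ n) (Set.Ici t) := by
  intro y (hty : t ≤ y) x _ hyx
  have hy : 0 < y := ht.trans_le hty
  have hbase_nonneg : 0 ≤ 1 - t / y := sub_nonneg.2 (div_le_one_of_le₀ hty hy.le)
  have hbase_le : 1 - t / y ≤ 1 - t / x :=
    sub_le_sub_left (div_le_div_of_nonneg_left ht.le hy hyx) 1
  calc y * (1 - t / y) ^ n ≤ y * (1 - t / x) ^ n :=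
        mul_le_mul_of_nonneg_left (pow_le_pow_left₀ hbase_nonneg hbase_le n) hy.le
    _ ≤ x * (1 - t / x) ^ n :=
        mul_le_mul_of_nonneg_right hyx (pow_nonneg (hbase_nonneg.trans hbase_le) n)

/-- Nonnegativity of `k (1 - t/k)^k - (k-1) (1 - t/(k-1))^k` for `t ∈ (0,1]`
and integers `k ≥ 2`. -/
theorem E1_nonneg (t : ℝ) (ht0 : 0 < t) (ht1 : t ≤ 1) (k : ℕ) (hk : 2 ≤ k) :
    (k : ℝ) * (1 - t / (k : ℝ)) ^ k - ((k : ℝ) - 1) * (1 - t / ((k : ℝ) - 1)) ^ k ≥ 0 := by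
  have hk' : (2 : ℝ) ≤ k := by exact_mod_cast hk
  have hmono := monotoneOn_mul_one_sub_div_pow ht0 k
    (show t ≤ (k : ℝ) - 1 by linarith) (show t ≤ (k : ℝ) by linarith) (sub_le_self _ zero_le_one)
  exact sub_nonneg.2 hmono
end
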